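/- arXiv:1401.0088 — 3 statements merged into one kernel-verified Lean document; each statement's English description precedes it below -/
import Mathlib

section
/- Let R be a commutative ring with 1 and τ a refinable symmetric relation on R#. If a = λ a₁ ⋯ aₙ is a τ-complete factorization, then each aᵢ is τ-strongly irreducible. -/
/-! Given a factor `b` of the complete factorization `l` and a τ-factorization `l'` of `b`,
refine `b` by `l'` and every other factor by itself. By refinability the result is again a
τ-factorization of `a`, so completeness bounds its length by that of `l`; hence `l'` has a
single entry, which is an associate of `b`. -/

variable {R : Type*} [CommRing R]

/-- A τ-factorization of `a`: `a = u * (a₁ ⋯ aₙ)` with `u` a unit, each factor a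
nonunit, and distinct factors pairwise τ-related. -/
def IsTauFact (τ : R → R → Prop) (a : R) (l : List R) : Prop :=
  l ≠ [] ∧ (∀ b ∈ l, ¬ IsUnit b) ∧ l.Pairwise τ ∧ ∃ u : Rˣ, a = u * l.prod

/-- `l'` is obtained from `l` by replacing each entry by a τ-factorization of it. -/
def IsRefinement (τ : R → R → Prop) (l l' : List R) : Prop :=
  ∃ L : List (List R), List.Forall₂ (IsTauFact τ) l L ∧ l' = L.flatten

/-- A τ-complete factorization: a τ-factorization admitting no strictly longer
τ-refinement which is itself a τ-factorization. -/
def IsTauComplete (τ : R → R → Prop) (a : R) (l : List R) : Prop :=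
  IsTauFact τ a l ∧
    ∀ l', IsRefinement τ l l' → IsTauFact τ a l' → l'.length ≤ l.length

/-- τ is refinable: every τ-refinement of a τ-factorization is a τ-factorization. -/
def Refinable (τ : R → R → Prop) : Prop :=
  ∀ (a : R) (l l' : List R), IsTauFact τ a l → IsRefinement τ l l' → IsTauFact τ a l'

/-- τ-unrefinably irreducible: a nonunit with only trivial τ-factorizations. -/
def UnrefIrred (τ : R → R → Prop) (a : R) : Prop :=
  ¬ IsUnit a ∧ ∀ l, IsTauFact τ a l → l.length = 1

section

variable {τ : R → R → Prop}

theorem isTauFact_singleton {x : R} (hx : ¬ IsUnit x) : IsTauFact τ x [x] :=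
  ⟨List.cons_ne_nil _ _, by simpa using hx, List.pairwise_singleton _ _, ⟨1, by simp⟩⟩

theorem IsTauFact.exists_eq_unit_mul {b : R} {l : List R} (h : IsTauFact τ b l)
    (hlen : l.length ≤ 1) : ∃ c ∈ l, ∃ u : Rˣ, b = u * c := by
  obtain ⟨c, rfl⟩ : ∃ c, l = [c] :=
    List.length_eq_one_iff.1 (le_antisymm hlen (List.length_pos_iff.2 h.1))
  obtain ⟨u, hu⟩ := h.2.2.2
  exact ⟨c, List.mem_singleton_self c, u, by simpa using hu⟩

theorem isRefinement_self {l : List R} (hl : ∀ x ∈ l, ¬ IsUnit x) : IsRefinement τ l l :=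
  ⟨l.map fun x => [x],
    List.forall₂_map_right_iff.2 (List.forall₂_same.2 fun x hx => isTauFact_singleton (hl x hx)),
    by simp [← List.flatMap_def]⟩

theorem IsRefinement.append {l₁ l₂ m₁ m₂ : List R} (h₁ : IsRefinement τ l₁ m₁)
    (h₂ : IsRefinement τ l₂ m₂) : IsRefinement τ (l₁ ++ l₂) (m₁ ++ m₂) := by
  obtain ⟨L₁, hL₁, rfl⟩ := h₁
  obtain ⟨L₂, hL₂, rfl⟩ := h₂
  exact ⟨L₁ ++ L₂, List.rel_append hL₁ hL₂, by simp⟩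

theorem IsRefinement.cons {b : R} {l m l' : List R} (hb : IsTauFact τ b l')
    (h : IsRefinement τ l m) : IsRefinement τ (b :: l) (l' ++ m) := by
  obtain ⟨L, hL, rfl⟩ := h
  exact ⟨l' :: L, List.Forall₂.cons hb hL, by simp⟩

theorem isRefinement_replace {l₁ l₂ l' : List R} {b : R}
    (hl : ∀ x ∈ l₁ ++ b :: l₂, ¬ IsUnit x) (hb : IsTauFact τ b l') :
    IsRefinement τ (l₁ ++ b :: l₂) (l₁ ++ (l' ++ l₂)) :=
  (isRefinement_self fun x hx => hl x (by simp [hx])).append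
    (IsRefinement.cons hb (isRefinement_self fun x hx => hl x (by simp [hx])))

theorem IsTauComplete.length_le_one_of_mem (href : Refinable τ) {a b : R} {l l' : List R}
    (hc : IsTauComplete τ a l) (hb : b ∈ l) (hl' : IsTauFact τ b l') : l'.length ≤ 1 := by
  obtain ⟨l₁, l₂, rfl⟩ := List.append_of_mem hb
  have hrefine := isRefinement_replace hc.1.2.1 hl'
  have hlen := hc.2 _ hrefine (href a _ _ hc.1 hrefine)
  simp only [List.length_append, List.length_cons] at hlen
  omega

end

theorem stmt5_general (τ : R → R → Prop) (href : Refinable τ)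
    (a : R) (l : List R) (hc : IsTauComplete τ a l) :
    ∀ b ∈ l, ∀ l', IsTauFact τ b l' → ∃ c ∈ l', ∃ u : Rˣ, b = u * c :=
  fun _ hb _ hl' => hl'.exists_eq_unit_mul (hc.length_le_one_of_mem href hb hl')

theorem stmt5 (τ : R → R → Prop) (hsym : Symmetric τ) (href : Refinable τ)
    (a : R) (l : List R) (hc : IsTauComplete τ a l) :
    ∀ b ∈ l, ∀ l', IsTauFact τ b l' → ∃ c ∈ l', ∃ u : Rˣ, b = u * c :=
  stmt5_general τ href a l hc
end

section
/- Let R be a commutative ring with 1 and τ a symmetric relation on R#. If R is a τ-complete-β-FFR (β any of the associate relations), then R is a τ-complete-BFR: for each nonunit a there is N(a) ∈ ℕ bounding the length of every τ-complete factorization of a. -/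
variable {R : Type*} [CommRing R]

/-- Two factorizations agree up to reordering and associates. -/
def AssocListEq (l m : List R) : Prop :=
  ∃ m' : List R, m.Perm m' ∧
    List.Forall₂ (fun x y : R => Ideal.span {x} = Ideal.span {y}) l m'

theorem AssocListEq.length_eq {l m : List R} (h : AssocListEq l m) : l.length = m.length := by
  obtain ⟨m', hperm, hassoc⟩ := h
  exact hassoc.length_eq.trans hperm.length_eq.symm

theorem stmt13_general (τ : R → R → Prop)
    (hffr : ∀ a : R, ¬ IsUnit a → ∃ S : Set (List R), S.Finite ∧
      ∀ l, IsTauComplete τ a l → ∃ m ∈ S, AssocListEq l m) :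
    ∀ a : R, ¬ IsUnit a → ∃ N : ℕ, ∀ l, IsTauComplete τ a l → l.length ≤ N := by
  intro a ha
  obtain ⟨S, hfin, hrep⟩ := hffr a ha
  obtain ⟨N, hN⟩ := (hfin.image List.length).bddAbove
  refine ⟨N, fun l hl => ?_⟩
  obtain ⟨m, hmS, hlm⟩ := hrep l hl
  rw [hlm.length_eq]
  exact hN (Set.mem_image_of_mem _ hmS)

theorem stmt13 (τ : R → R → Prop) (hsym : Symmetric τ)
    (hffr : ∀ a : R, ¬ IsUnit a → ∃ S : Set (List R), S.Finite ∧
      ∀ l, IsTauComplete τ a l → ∃ m ∈ S, AssocListEq l m) :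
    ∀ a : R, ¬ IsUnit a → ∃ N : ℕ, ∀ l, IsTauComplete τ a l → l.length ≤ N :=
  stmt13_general τ hffr
end

section
/- Let R be a commutative ring with 1 and τ a refinable symmetric relation on R#, with R τ-complete. If R is a τ-complete-BFR, then R is a τ-BFR: for every nonunit a there is a bound N(a) on the lengths of all τ-factorizations of a. -/
variable {R : Type*} [CommRing R]

/-!
Refine every factor of a τ-factorization `a = λ a₁ ⋯ aₙ` into a τ-complete factorization of
`aᵢ`. By refinability the concatenation is again a τ-factorization of `a`, and it is τ-complete:
a τ-refinement of it splits into τ-refinements of the blocks, and each of those is a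
τ-factorization of the corresponding `aᵢ`, hence no longer than the block. So `n` is at most
the length of a τ-complete factorization of `a`, which is bounded by `N(a)`.
-/

namespace List

variable {α β γ δ : Type*} {r : α → β → Prop}

theorem Forall₂.exists_append_eq {l₁ l₂ : List α} {m : List β} (h : Forall₂ r (l₁ ++ l₂) m) :
    ∃ m₁ m₂, Forall₂ r l₁ m₁ ∧ Forall₂ r l₂ m₂ ∧ m = m₁ ++ m₂ :=
  ⟨m.take l₁.length, m.drop l₁.length, by simpa using forall₂_take l₁.length h,
    by simpa using forall₂_drop l₁.length h, (take_append_drop _ _).symm⟩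

theorem Forall₂.exists_flatten_eq {L : List (List α)} {m : List β}
    (h : Forall₂ r L.flatten m) : ∃ M, Forall₂ (Forall₂ r) L M ∧ m = M.flatten := by
  induction L generalizing m with
  | nil => exact ⟨[], .nil, by simpa using h⟩
  | cons l L ih =>
    obtain ⟨m₁, m₂, h₁, h₂, rfl⟩ := h.exists_append_eq
    obtain ⟨M, hM, rfl⟩ := ih h₂
    exact ⟨m₁ :: M, .cons h₁ hM, rfl⟩

theorem Forall₂.length_flatMap_le {f : α → List γ} {g : β → List δ} {l : List α} {m : List β}
    (h : Forall₂ (fun a b => (g b).length ≤ (f a).length) l m) :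
    (m.flatMap g).length ≤ (l.flatMap f).length := by
  induction h with
  | nil => simp
  | cons hab _ ih => simp only [flatMap_cons, length_append]; omega

theorem length_le_length_flatMap {f : α → List β} {l : List α} (hf : ∀ a ∈ l, f a ≠ []) :
    l.length ≤ (l.flatMap f).length := by
  induction l with
  | nil => simp
  | cons a l ih =>
    have hfa : 0 < (f a).length := length_pos_iff.2 (hf a mem_cons_self)
    have htail := ih fun b hb => hf b (mem_cons_of_mem a hb)
    simp only [flatMap_cons, length_append, length_cons]
    omega

end List

open List

section

variable {τ : R → R → Prop} {a : R} {l c : List R}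

theorem IsTauComplete.length_flatten_le (href : Refinable τ) (hc : IsTauComplete τ a c)
    {M : List (List R)} (hM : Forall₂ (IsTauFact τ) c M) : M.flatten.length ≤ c.length :=
  hc.2 _ ⟨M, hM, rfl⟩ (href a c _ hc.1 ⟨M, hM, rfl⟩)

theorem IsTauFact.isTauComplete_flatMap (href : Refinable τ) (hl : IsTauFact τ a l)
    {f : R → List R} (hf : ∀ x ∈ l, IsTauComplete τ x (f x)) :
    IsTauComplete τ a (l.flatMap f) := by
  have hrefine : IsRefinement τ l (l.flatMap f) :=
    ⟨l.map f, forall₂_map_right_iff.2 (forall₂_same.2 fun x hx => (hf x hx).1), flatMap_def⟩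
  refine ⟨href a l _ hl hrefine, ?_⟩
  rintro _ ⟨M, hM, rfl⟩ -
  rw [flatMap_def] at hM
  obtain ⟨Ms, hMs, rfl⟩ := hM.exists_flatten_eq
  rw [forall₂_map_left_iff] at hMs
  have hblocks : Forall₂ (fun x ms => (flatten ms).length ≤ (f x).length) l Ms :=
    ((forall₂_and_left _ _).2 ⟨hf, hMs⟩).imp fun _ _ h => h.1.length_flatten_le href h.2
  rw [flatten_flatten, ← flatMap_def]
  exact hblocks.length_flatMap_le

end

theorem stmt15_general (τ : R → R → Prop) (href : Refinable τ)
    (hcompl : ∀ a : R, ¬ IsUnit a → ∃ l, IsTauComplete τ a l)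
    (hbfr : ∀ a : R, ¬ IsUnit a → ∃ N : ℕ, ∀ l, IsTauComplete τ a l → l.length ≤ N) :
    ∀ a : R, ¬ IsUnit a → ∃ N : ℕ, ∀ l, IsTauFact τ a l → l.length ≤ N := by
  intro a ha
  obtain ⟨N, hN⟩ := hbfr a ha
  choose! f hf using hcompl
  refine ⟨N, fun l hl => ?_⟩
  have hlf : ∀ x ∈ l, IsTauComplete τ x (f x) := fun x hx => hf x (hl.2.1 x hx)
  calc l.length ≤ (l.flatMap f).length := length_le_length_flatMap fun x hx => (hlf x hx).1.1
    _ ≤ N := hN _ (hl.isTauComplete_flatMap href hlf)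

theorem stmt15 (τ : R → R → Prop) (hsym : Symmetric τ) (href : Refinable τ)
    (hcompl : ∀ a : R, ¬ IsUnit a → ∃ l, IsTauComplete τ a l)
    (hbfr : ∀ a : R, ¬ IsUnit a → ∃ N : ℕ, ∀ l, IsTauComplete τ a l → l.length ≤ N) :
    ∀ a : R, ¬ IsUnit a → ∃ N : ℕ, ∀ l, IsTauFact τ a l → l.length ≤ N :=
  stmt15_general τ href hcompl hbfr
end
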